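/- Let $h_0 > 0$, $d, \mu > 0$ with $h_0 < \frac{\pi}{2}\sqrt{d/\mu}$, so that $\lambda_1 := \frac{d\pi^2}{4h_0^2} > \mu$. Let $k > 0$ be such that $x\phi'(x) \leq k\phi(x)$ on $[-h_0,h_0]$ for $\phi(x) = \sin(\pi(x+h_0)/(2h_0))$. Define, for $0 < \varepsilon, \rho < 1$, $s(t) = 1+2\varepsilon - \varepsilon e^{-\rho t}$ and $w(t,x) = K e^{-\rho t}\phi(x/s(t))$ on $\{(t,x) : t \geq 0, |x| \leq h_0 s(t)\}$. Then there exists $\delta > 0$ such that for all $0 < \varepsilon, \rho \leq \delta$ and all $K > 0$, $w_t - d\,w_{xx} - \mu w > 0$ for all $t > 0$ and $|x| < h_0 s(t)$. -/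

import Mathlib

/-!
With `y = x / s t`, `φ'' = -(λ₁ / d) φ` turns the operator into
`K e^{-ρt} (-ρ φ(y) - y φ'(y) s'/s + λ₁ φ(y) / s² - μ φ(y))`.
Since `s'/s ≤ ερ`, `y φ'(y) ≤ k φ(y)`, `1 < s ≤ 1 + 2ε` and `φ(y) > 0` for `|y| < h₀`, the
bracket is at least `φ(y) (λ₁ / (1 + 2δ)² - μ - δ - kδ²)`, which is positive for small `δ`
because `λ₁ > μ`.
-/

open Real Set Filter Topology

lemma mu_lt_of_lt_pi_div_two_mul_sqrt {d μ h₀ : ℝ} (hμ : 0 < μ) (hh₀ : 0 < h₀)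
    (hcrit : h₀ < π / 2 * √(d / μ)) : μ < d * (π / (2 * h₀)) ^ 2 := by
  have hd : 0 < d / μ := by
    by_contra! h
    rw [sqrt_eq_zero'.mpr h, mul_zero] at hcrit
    exact hcrit.not_gt hh₀
  have hsq : h₀ ^ 2 < (π / 2) ^ 2 * (d / μ) := by
    calc h₀ ^ 2 < (π / 2 * √(d / μ)) ^ 2 := pow_lt_pow_left₀ hcrit hh₀.le two_ne_zero
      _ = (π / 2) ^ 2 * (d / μ) := by rw [mul_pow, sq_sqrt hd.le]
  rw [div_pow, mul_div_assoc', lt_div_iff₀ (by positivity)]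
  rw [mul_div_assoc', lt_div_iff₀ hμ] at hsq
  linarith

lemma exists_pos_add_add_mul_sq_lt_div_sq {μ k lam : ℝ} (h : μ < lam) :
    ∃ δ > 0, μ + δ + k * δ ^ 2 < lam / (1 + 2 * δ) ^ 2 := by
  have hev : ∀ᶠ δ in 𝓝 (0 : ℝ), μ + δ + k * δ ^ 2 < lam / (1 + 2 * δ) ^ 2 :=
    ContinuousAt.eventually_lt (by fun_prop) (by fun_prop (disch := norm_num)) (by simpa using h)
  obtain ⟨δ, hδ, hδpos⟩ :=
    ((hev.filter_mono nhdsWithin_le_nhds).and (self_mem_nhdsWithin (s := Ioi 0))).exists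
  exact ⟨δ, hδpos, hδ⟩

lemma supersolution_residual_pos {μ k lam δ ρ r S p q : ℝ} (hk : 0 ≤ k) (hlam : 0 ≤ lam)
    (hp : 0 < p) (hq : q ≤ k * p) (hr : 0 ≤ r) (hrδ : r ≤ δ ^ 2) (hρδ : ρ ≤ δ) (hS : 0 < S)
    (hSδ : S ≤ 1 + 2 * δ) (hδ : μ + δ + k * δ ^ 2 < lam / (1 + 2 * δ) ^ 2) :
    0 < -ρ * p - q * r + lam * p / S ^ 2 - μ * p := by
  have hdiff : lam / (1 + 2 * δ) ^ 2 ≤ lam / S ^ 2 := by gcongr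
  have hqr : q * r ≤ k * δ ^ 2 * p := by
    calc q * r ≤ k * p * r := by gcongr
      _ ≤ k * p * δ ^ 2 := by gcongr
      _ = k * δ ^ 2 * p := by ring
  have : 0 < p * (lam / S ^ 2 - ρ - k * δ ^ 2 - μ) := mul_pos hp (by linarith)
  rw [mul_div_right_comm]
  nlinarith

section Derivatives

variable {φ : ℝ → ℝ}

lemma hasDerivAt_mul_exp_mul_comp_div {s : ℝ → ℝ} {s' : ℝ} (K ρ x : ℝ) {t : ℝ}
    (hφ : DifferentiableAt ℝ φ (x / s t)) (hs : HasDerivAt s s' t) (hst : s t ≠ 0) :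
    HasDerivAt (fun τ => K * exp (-ρ * τ) * φ (x / s τ))
      (K * exp (-ρ * t) * (-ρ * φ (x / s t) - x / s t * deriv φ (x / s t) * (s' / s t))) t := by
  have hexp : HasDerivAt (fun τ => K * exp (-ρ * τ)) (K * (exp (-ρ * t) * -ρ)) t :=
    (((hasDerivAt_id t).const_mul (-ρ)).exp.const_mul K).congr_deriv (by simp)
  have hdiv : HasDerivAt (fun τ => x / s τ) (-(x * s') / s t ^ 2) t := by
    simpa using (hasDerivAt_const t x).fun_div hs hst
  refine (hexp.fun_mul (hφ.hasDerivAt.comp t hdiv)).congr_deriv ?_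
  simp only [Function.comp_apply]
  field_simp
  ring

lemma deriv_const_mul_comp_div_const (hφ : Differentiable ℝ φ) (c S : ℝ) :
    deriv (fun y => c * φ (y / S)) = fun y => c * (deriv φ (y / S) / S) := by
  funext y
  exact (((hφ _).hasDerivAt.comp y ((hasDerivAt_id y).div_const S)).const_mul c).deriv.trans
    (by simp [div_eq_mul_inv])

lemma deriv_deriv_const_mul_comp_div_const (hφ : Differentiable ℝ φ) (c S x : ℝ)
    (hφ' : DifferentiableAt ℝ (deriv φ) (x / S)) :
    deriv (deriv fun y => c * φ (y / S)) x = c * deriv (deriv φ) (x / S) / S ^ 2 := by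
  rw [deriv_const_mul_comp_div_const hφ]
  have hdiv : HasDerivAt (fun y : ℝ => y / S) (1 / S) x := (hasDerivAt_id x).div_const S
  refine (((hφ'.hasDerivAt.comp x hdiv).div_const S).const_mul c).deriv.trans ?_
  ring

lemma parabolic_operator_eq_of_scaled_profile {s : ℝ → ℝ} {w : ℝ → ℝ → ℝ} {s' : ℝ}
    (d μ K ρ : ℝ) {t x : ℝ}
    (hw : ∀ t x, w t x = K * exp (-ρ * t) * φ (x / s t)) (hφ : Differentiable ℝ φ)
    (hφ' : DifferentiableAt ℝ (deriv φ) (x / s t)) (hs : HasDerivAt s s' t) (hst : s t ≠ 0) :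
    deriv (fun τ => w τ x) t - d * deriv (deriv fun y => w t y) x - μ * w t x =
      K * exp (-ρ * t) * (-ρ * φ (x / s t) - x / s t * deriv φ (x / s t) * (s' / s t)
        - d * deriv (deriv φ) (x / s t) / s t ^ 2 - μ * φ (x / s t)) := by
  simp only [hw]
  rw [(hasDerivAt_mul_exp_mul_comp_div K ρ x (hφ _) hs hst).deriv,
    deriv_deriv_const_mul_comp_div_const hφ _ _ _ hφ']
  ring

end Derivatives

lemma deriv_sin_mul_add (a b : ℝ) :
    deriv (fun y => sin (a * (y + b))) = fun y => a * cos (a * (y + b)) := by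
  funext y
  exact ((((hasDerivAt_id y).add_const b).const_mul a).sin).deriv.trans (by simp; ring)

lemma deriv_deriv_sin_mul_add (a b y : ℝ) :
    deriv (deriv fun y => sin (a * (y + b))) y = -a ^ 2 * sin (a * (y + b)) := by
  rw [deriv_sin_mul_add]
  exact ((((hasDerivAt_id y).add_const b).const_mul a).cos.const_mul a).deriv.trans
    (by simp; ring)

lemma div_mem_Ioo_of_abs_lt_mul {x h S : ℝ} (hS : 0 < S) (hx : |x| < h * S) :
    x / S ∈ Ioo (-h) h :=
  abs_lt.mp (by rwa [abs_div, abs_of_pos hS, div_lt_iff₀ hS])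

lemma sin_mul_add_pos {h₀ y : ℝ} (hh₀ : 0 < h₀) (hy : y ∈ Ioo (-h₀) h₀) :
    0 < sin (π / (2 * h₀) * (y + h₀)) := by
  obtain ⟨hy1, hy2⟩ := hy
  apply sin_pos_of_pos_of_lt_pi (mul_pos (by positivity) (by linarith))
  rw [div_mul_eq_mul_div, div_lt_iff₀ (by positivity)]
  nlinarith [pi_pos]

section Front

variable {s : ℝ → ℝ} {ε ρ : ℝ}

lemma hasDerivAt_front (hs : ∀ t, s t = 1 + 2 * ε - ε * exp (-ρ * t))
    (t : ℝ) : HasDerivAt s (ε * ρ * exp (-ρ * t)) t := by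
  rw [funext hs]
  refine ((hasDerivAt_const t (1 + 2 * ε)).sub
    (((hasDerivAt_id t).const_mul (-ρ)).exp.const_mul ε)).congr_deriv ?_
  simp only [id, mul_one]
  ring

lemma one_lt_front (hs : ∀ t, s t = 1 + 2 * ε - ε * exp (-ρ * t))
    (hε : 0 < ε) (hρ : 0 < ρ) {t : ℝ} (ht : 0 < t) : 1 < s t := by
  have : exp (-ρ * t) < 1 := exp_lt_one_iff.mpr (by nlinarith)
  rw [hs]
  nlinarith

lemma front_le (hs : ∀ t, s t = 1 + 2 * ε - ε * exp (-ρ * t))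
    (hε : 0 ≤ ε) (t : ℝ) : s t ≤ 1 + 2 * ε := by
  rw [hs]
  nlinarith [exp_pos (-ρ * t)]

lemma deriv_front_div_le (hs : ∀ t, s t = 1 + 2 * ε - ε * exp (-ρ * t))
    (hε : 0 < ε) (hρ : 0 < ρ) {t : ℝ} (ht : 0 < t) : ε * ρ * exp (-ρ * t) / s t ≤ ε * ρ :=
  calc ε * ρ * exp (-ρ * t) / s t ≤ ε * ρ * exp (-ρ * t) :=
        div_le_self (by positivity) (one_lt_front hs hε hρ ht).le
    _ ≤ ε * ρ := mul_le_of_le_one_right (by positivity) (exp_le_one_iff.mpr (by nlinarith))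

end Front

theorem stmt_11_general (d μ h₀ : ℝ) (hμ : 0 < μ) (hh₀ : 0 < h₀)
    (hcrit : h₀ < π / 2 * Real.sqrt (d / μ))
    (φ : ℝ → ℝ) (hφ : ∀ x, φ x = Real.sin (π * (x + h₀) / (2 * h₀)))
    (k : ℝ) (hk : 0 < k)
    (hkφ : ∀ x ∈ Icc (-h₀) h₀, x * deriv φ x ≤ k * φ x) :
    ∃ δ > 0, ∀ ε ρ : ℝ, 0 < ε → ε ≤ δ → 0 < ρ → ρ ≤ δ → ∀ K > (0:ℝ),
      ∀ (s : ℝ → ℝ) (w : ℝ → ℝ → ℝ),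
      (∀ t : ℝ, s t = 1 + 2 * ε - ε * Real.exp (-ρ * t)) →
      (∀ (t x : ℝ), w t x = K * Real.exp (-ρ * t) * φ (x / s t)) →
      ∀ t > (0:ℝ), ∀ x : ℝ, |x| < h₀ * s t →
        deriv (fun τ => w τ x) t - d * deriv (deriv (fun y => w t y)) x
          - μ * w t x > 0 := by
  have hφ_sin : φ = fun y => sin (π / (2 * h₀) * (y + h₀)) := funext fun y => by
    rw [hφ]; congr 1; ring
  have hφ_diff : Differentiable ℝ φ := hφ_sin ▸ by fun_prop
  have hφ'_diff : Differentiable ℝ (deriv φ) := by rw [hφ_sin, deriv_sin_mul_add]; fun_prop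
  have hlam := mu_lt_of_lt_pi_div_two_mul_sqrt hμ hh₀ hcrit
  obtain ⟨δ, hδ, hδμ⟩ := exists_pos_add_add_mul_sq_lt_div_sq (k := k) hlam
  refine ⟨δ, hδ, fun ε ρ hε hεδ hρ hρδ K hK s w hs hw t ht x hx => ?_⟩
  have hs1 := one_lt_front hs hε hρ ht
  have hy : x / s t ∈ Ioo (-h₀) h₀ := div_mem_Ioo_of_abs_lt_mul (by linarith) hx
  have hr : ε * ρ * exp (-ρ * t) / s t ≤ δ ^ 2 :=
    (deriv_front_div_le hs hε hρ ht).trans (by rw [sq]; gcongr)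
  have hφ'' : deriv (deriv φ) (x / s t) = -(π / (2 * h₀)) ^ 2 * φ (x / s t) := by
    rw [hφ_sin]; exact deriv_deriv_sin_mul_add _ _ _
  have hφ_pos : 0 < φ (x / s t) := hφ_sin ▸ sin_mul_add_pos hh₀ hy
  rw [parabolic_operator_eq_of_scaled_profile d μ K ρ hw hφ_diff (hφ'_diff _)
    (hasDerivAt_front hs t) (by positivity), hφ'']
  refine mul_pos (by positivity) ((supersolution_residual_pos hk.le (hμ.trans hlam).le hφ_pos
    (hkφ _ (Ioo_subset_Icc_self hy)) (by positivity) hr hρδ (by linarith)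
    ((front_le hs hε.le t).trans (by linarith)) hδμ).trans_eq ?_)
  ring

theorem stmt_11 (d μ h₀ : ℝ) (hd : 0 < d) (hμ : 0 < μ) (hh₀ : 0 < h₀)
    (hcrit : h₀ < π / 2 * Real.sqrt (d / μ))
    (φ : ℝ → ℝ) (hφ : ∀ x, φ x = Real.sin (π * (x + h₀) / (2 * h₀)))
    (k : ℝ) (hk : 0 < k)
    (hkφ : ∀ x ∈ Icc (-h₀) h₀, x * deriv φ x ≤ k * φ x) :
    ∃ δ > 0, ∀ ε ρ : ℝ, 0 < ε → ε ≤ δ → 0 < ρ → ρ ≤ δ → ∀ K > (0:ℝ),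
      ∀ (s : ℝ → ℝ) (w : ℝ → ℝ → ℝ),
      (∀ t : ℝ, s t = 1 + 2 * ε - ε * Real.exp (-ρ * t)) →
      (∀ (t x : ℝ), w t x = K * Real.exp (-ρ * t) * φ (x / s t)) →
      ∀ t > (0:ℝ), ∀ x : ℝ, |x| < h₀ * s t →
        deriv (fun τ => w τ x) t - d * deriv (deriv (fun y => w t y)) x
          - μ * w t x > 0 :=
  stmt_11_general d μ h₀ hμ hh₀ hcrit φ hφ k hk hkφ
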